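/- For every j : Fin 5, every point x of convexHull ℝ V satisfies x j ≥ 0, and the intersection of convexHull ℝ V with the hyperplane {x | x j = 0} equals convexHull ℝ (T j). In other words, each tetrahedral facet of the rectified 5-cell lies in the hyperplane x_j = 0 and is the convex hull of the four vertices lying on that hyperplane. -/

import Mathlib

noncomputable section

/-- The vertex set of the Euclidean rectified 5-cell: all coordinate
permutations of the point `(1,1,1,0,0)`. -/
def V : Set (EuclideanSpace ℝ (Fin 5)) :=
  {x | (∀ i, x i = 0 ∨ x i = 1) ∧ (∑ i, x i) = 3}

/-- The vertex set of the tetrahedral facet labelled `j`. -/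
def T (j : Fin 5) : Set (EuclideanSpace ℝ (Fin 5)) := {v ∈ V | v j = 0}

/-!
The coordinate functional `x ↦ x j` is nonnegative on every vertex, so `{x | x j = 0}` is a
supporting hyperplane of the polytope. For any linear functional `f ≥ 0` on a set `s`, a convex
combination of points of `s` on which `f` vanishes can only give positive weight to points with
`f = 0`; hence the hull of `s` meets `{f = 0}` exactly in the hull of `s ∩ {f = 0}`.
-/

section SupportingHyperplane

variable {𝕜 E : Type*} [Field 𝕜] [LinearOrder 𝕜] [IsStrictOrderedRing 𝕜] [AddCommGroup E]
  [Module 𝕜 E] {f : E →ₗ[𝕜] 𝕜} {s : Set E}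

lemma convexHull_subset_nonneg_of_forall_nonneg (hs : ∀ v ∈ s, 0 ≤ f v) :
    convexHull 𝕜 s ⊆ {x | 0 ≤ f x} :=
  convexHull_min hs (convex_halfSpace_ge f.isLinear 0)

lemma convexHull_inter_ker_subset (hs : ∀ v ∈ s, 0 ≤ f v) :
    convexHull 𝕜 s ∩ {x | f x = 0} ⊆ convexHull 𝕜 {v ∈ s | f v = 0} := by
  rintro x ⟨hx, hfx⟩
  rw [convexHull_eq] at hx
  obtain ⟨ι, t, w, z, hw₀, hw₁, hz, rfl⟩ := hx
  have hterm : ∀ i ∈ t, w i * f (z i) = 0 := by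
    refine (Finset.sum_eq_zero_iff_of_nonneg fun i hi =>
      mul_nonneg (hw₀ i hi) (hs _ (hz i hi))).1 ?_
    simpa [Finset.centerMass_eq_of_sum_1 _ _ hw₁, map_sum, map_smul] using hfx
  rw [← Finset.centerMass_filter_ne_zero]
  refine Finset.centerMass_mem_convexHull _ (fun i hi => hw₀ i (Finset.mem_filter.1 hi).1) ?_ ?_
  · rw [Finset.sum_filter_ne_zero, hw₁]
    exact one_pos
  · intro i hi
    obtain ⟨hit, hwi⟩ := Finset.mem_filter.1 hi
    exact ⟨hz i hit, (mul_eq_zero.1 (hterm i hit)).resolve_left hwi⟩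

lemma convexHull_inter_ker_eq (hs : ∀ v ∈ s, 0 ≤ f v) :
    convexHull 𝕜 s ∩ {x | f x = 0} = convexHull 𝕜 {v ∈ s | f v = 0} :=
  (convexHull_inter_ker_subset hs).antisymm <| Set.subset_inter
    (convexHull_mono (Set.sep_subset _ _))
    (convexHull_min (fun _ hv => hv.2) (convex_hyperplane f.isLinear 0))

end SupportingHyperplane

lemma coord_nonneg_of_mem_V (j : Fin 5) : ∀ v ∈ V, 0 ≤ v j := by
  rintro v ⟨hv, -⟩
  rcases hv j with h | h <;> simp [h]

theorem tetrahedral_facet (j : Fin 5) :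
    (∀ x ∈ convexHull ℝ V, 0 ≤ x j) ∧
    convexHull ℝ V ∩ {x | x j = 0} = convexHull ℝ (T j) := by
  let f : EuclideanSpace ℝ (Fin 5) →ₗ[ℝ] ℝ := (EuclideanSpace.proj j).toLinearMap
  have hV : ∀ v ∈ V, 0 ≤ f v := coord_nonneg_of_mem_V j
  exact ⟨fun _ hx => convexHull_subset_nonneg_of_forall_nonneg hV hx, convexHull_inter_ker_eq hV⟩
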